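/- arXiv:1502.02107 — 7 statements merged into one kernel-verified Lean document; each statement's English description precedes it below -/
import Mathlib

section
/- For every real x with 0 ≤ x ≤ log(√2), one has e^{3x} + 2·e^{-3x} ≤ (5/2)·√2, with equality if and only if x = log(√2). In particular e^{3·log√2} + 2·e^{-3·log√2} = (5/2)·√2. -/
/-- Lemma 4.3 (optimization content): for `0 ≤ x ≤ log √2` one has
`e^{3x} + 2e^{-3x} ≤ (5/2)√2`, with equality iff `x = log √2`; in particular
the value at `x = log √2` equals `(5/2)√2`. -/
theorem density_B01_max :
    (∀ x : ℝ, 0 ≤ x → x ≤ Real.log (Real.sqrt 2) →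
      Real.exp (3 * x) + 2 * Real.exp (-(3 * x)) ≤ (5 / 2) * Real.sqrt 2 ∧
      (Real.exp (3 * x) + 2 * Real.exp (-(3 * x)) = (5 / 2) * Real.sqrt 2 ↔
        x = Real.log (Real.sqrt 2))) ∧
    Real.exp (3 * Real.log (Real.sqrt 2)) + 2 * Real.exp (-(3 * Real.log (Real.sqrt 2))) =
      (5 / 2) * Real.sqrt 2 := by
  have hs2pos : (0:ℝ) < Real.sqrt 2 := by positivity
  have s2 : Real.sqrt 2 ^ 2 = 2 := Real.sq_sqrt (by norm_num)
  have hval : Real.exp (3 * Real.log (Real.sqrt 2)) = 2 * Real.sqrt 2 := by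
    rw [show (3:ℝ) * Real.log (Real.sqrt 2)
        = Real.log (Real.sqrt 2) + (Real.log (Real.sqrt 2) + Real.log (Real.sqrt 2)) by ring,
      Real.exp_add, Real.exp_add, Real.exp_log hs2pos]
    nlinarith
  have key : ∀ x : ℝ, 0 ≤ x → x ≤ Real.log (Real.sqrt 2) →
      Real.exp (3 * x) + 2 * Real.exp (-(3 * x)) ≤ (5 / 2) * Real.sqrt 2 ∧
      (Real.exp (3 * x) + 2 * Real.exp (-(3 * x)) = (5 / 2) * Real.sqrt 2 ↔
        x = Real.log (Real.sqrt 2)) := by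
    intro x hx0 hx1
    set t := Real.exp (3 * x) with ht
    have ht0 : (0:ℝ) < t := Real.exp_pos _
    have ht1 : (1:ℝ) ≤ t := Real.one_le_exp (by linarith)
    have ht2 : t ≤ 2 * Real.sqrt 2 := by
      rw [← hval]; exact Real.exp_le_exp.mpr (by linarith)
    have hneg : Real.exp (-(3 * x)) = t⁻¹ := Real.exp_neg _
    have hinv : t * t⁻¹ = 1 := mul_inv_cancel₀ (ne_of_gt ht0)
    have hs2lt : Real.sqrt 2 < 2 := by nlinarith
    have hfac : 0 ≤ (2 * Real.sqrt 2 - t) * (2 * t - Real.sqrt 2) := by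
      apply mul_nonneg (by linarith)
      nlinarith
    constructor
    · rw [hneg]
      nlinarith [mul_pos ht0 hs2pos]
    · rw [hneg]
      constructor
      · intro heq
        have hzero : (2 * Real.sqrt 2 - t) * (2 * t - Real.sqrt 2) = 0 := by
          nlinarith
        have ht2e : t = 2 * Real.sqrt 2 := by
          rcases mul_eq_zero.1 hzero with h | h
          · linarith
          · nlinarith
        have : Real.exp (3 * x) = Real.exp (3 * Real.log (Real.sqrt 2)) := by
          rw [hval]; exact ht2e
        have := Real.exp_injective this
        linarith
      · intro hx
        subst hx
        have ht2e : t = 2 * Real.sqrt 2 := hval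
        nlinarith [hinv, ht2e, s2, hs2pos, mul_pos hs2pos ht0]
  refine ⟨key, ?_⟩
  have := (key (Real.log (Real.sqrt 2)) ?_ le_rfl).2.mpr rfl
  · exact this
  · rw [Real.log_nonneg_iff hs2pos]
    nlinarith
end

section
/- Let ρ₁ = log(√2). For every real x with 0 ≤ x ≤ log(√2), one has 2·e^{3(ρ₁+x)} + 6·e^{3(ρ₁-x)} + 16·e^{-3(ρ₁+x)} ≤ 20·√2, with equality if and only if x = 0. -/
set_option maxHeartbeats 1000000


/-- Lemma 4.5 (optimization content): with `ρ₁ = log √2`, for `0 ≤ x ≤ log √2` one has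
`2e^{3(ρ₁+x)} + 6e^{3(ρ₁-x)} + 16e^{-3(ρ₁+x)} ≤ 20√2`, with equality iff `x = 0`. -/
theorem density_B12_max (ρ₁ : ℝ) (hρ₁ : ρ₁ = Real.log (Real.sqrt 2)) :
    ∀ x : ℝ, 0 ≤ x → x ≤ Real.log (Real.sqrt 2) →
      2 * Real.exp (3 * (ρ₁ + x)) + 6 * Real.exp (3 * (ρ₁ - x)) +
        16 * Real.exp (-(3 * (ρ₁ + x))) ≤ 20 * Real.sqrt 2 ∧
      (2 * Real.exp (3 * (ρ₁ + x)) + 6 * Real.exp (3 * (ρ₁ - x)) +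
        16 * Real.exp (-(3 * (ρ₁ + x))) = 20 * Real.sqrt 2 ↔ x = 0) := by
  intro x hx0 hx1
  set s := Real.sqrt 2 with hsdef
  have h2 : (0:ℝ) < s := Real.sqrt_pos.mpr (by norm_num)
  have hs : s * s = 2 := Real.mul_self_sqrt (by norm_num)
  have he : Real.exp ρ₁ = s := by rw [hρ₁, Real.exp_log h2]
  set t := Real.exp (3 * x) with htdef
  have ht0 : 0 < t := Real.exp_pos _
  have ht1 : 1 ≤ t := by
    rw [htdef, show (1:ℝ) = Real.exp 0 from Real.exp_zero.symm]
    exact Real.exp_le_exp.mpr (by linarith)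
  have hs15 : s < 3/2 := by nlinarith
  have htu : t ≤ 2 * s := by
    have h3 : Real.exp (3 * Real.log s) = s * s * s := by
      rw [show 3 * Real.log s = Real.log s + (Real.log s + Real.log s) by ring,
        Real.exp_add, Real.exp_add, Real.exp_log h2]; ring
    have := Real.exp_le_exp.mpr (show 3 * x ≤ 3 * Real.log s by linarith)
    rw [h3] at this
    nlinarith
  have ht4 : t < 4 := by nlinarith
  have e1 : Real.exp (3 * (ρ₁ + x)) = s * s * s * t := by
    rw [show 3 * (ρ₁ + x) = ρ₁ + (ρ₁ + (ρ₁ + 3 * x)) by ring,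
      Real.exp_add, Real.exp_add, Real.exp_add, he, htdef]; ring
  have e2 : Real.exp (3 * (ρ₁ - x)) = s * s * s / t := by
    rw [show 3 * (ρ₁ - x) = ρ₁ + (ρ₁ + (ρ₁ + -(3 * x))) by ring,
      Real.exp_add, Real.exp_add, Real.exp_add, he, Real.exp_neg, htdef]
    field_simp
  have e3 : Real.exp (-(3 * (ρ₁ + x))) = (s * s * s * t)⁻¹ := by
    rw [Real.exp_neg, e1]
  rw [e1, e2, e3]
  have hform : 2 * (s * s * s * t) + 6 * (s * s * s / t) + 16 * (s * s * s * t)⁻¹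
      = 4 * s * t + 16 * s / t := by
    have hcube : s * s * s = 2 * s := by rw [hs]
    rw [hcube]
    field_simp
    ring_nf
    nlinarith [hs, ht0, sq_nonneg (s*t), sq_nonneg t]
  rw [hform]
  have hdiff : 4 * s * t + 16 * s / t - 20 * s = 4 * s * ((t - 1) * (t - 4)) / t := by
    field_simp; ring
  have hprod : 0 ≤ (t - 1) * (4 - t) := mul_nonneg (by linarith) (by linarith)
  have hnum : 4 * s * ((t - 1) * (t - 4)) ≤ 0 := by nlinarith
  have hle : 4 * s * ((t - 1) * (t - 4)) / t ≤ 0 := div_nonpos_of_nonpos_of_nonneg hnum ht0.le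
  constructor
  · linarith
  · constructor
    · intro heq
      have hz : 4 * s * ((t - 1) * (t - 4)) / t = 0 := by
        rw [← hdiff]; linarith
      have hz2 : (t - 1) * (t - 4) = 0 := by
        have := (div_eq_zero_iff.mp hz)
        rcases this with h | h
        · rcases mul_eq_zero.mp h with h' | h'
          · nlinarith
          · exact h'
        · exact absurd h (ne_of_gt ht0)
      have : t = 1 := by
        rcases mul_eq_zero.mp hz2 with h | h
        · linarith
        · linarith
      have hlog := Real.log_exp (3 * x)
      rw [← htdef, this, Real.log_one] at hlog
      linarith
    · intro hx
      subst hx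
      have : t = 1 := by rw [htdef]; norm_num
      rw [this]; field_simp; ring
end

section
/- Let ρ₁ = log(√2). For every real x with 0 ≤ x ≤ log(√2), one has e^{3(ρ₁+x)} + 7·e^{3(ρ₁-x)} + 8·e^{-3(ρ₁+x)} + 8·e^{-3(ρ₁-x)} ≤ 20·√2, with equality if and only if x = 0. -/
/-- Lemma 4.7 (optimization content): with `ρ₁ = log √2`, for `0 ≤ x ≤ log √2` one has
`e^{3(ρ₁+x)} + 7e^{3(ρ₁-x)} + 8e^{-3(ρ₁+x)} + 8e^{-3(ρ₁-x)} ≤ 20√2`,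
with equality iff `x = 0`. -/
theorem density_B13_max (ρ₁ : ℝ) (hρ₁ : ρ₁ = Real.log (Real.sqrt 2)) :
    ∀ x : ℝ, 0 ≤ x → x ≤ Real.log (Real.sqrt 2) →
      Real.exp (3 * (ρ₁ + x)) + 7 * Real.exp (3 * (ρ₁ - x)) +
        8 * Real.exp (-(3 * (ρ₁ + x))) + 8 * Real.exp (-(3 * (ρ₁ - x))) ≤ 20 * Real.sqrt 2 ∧
      (Real.exp (3 * (ρ₁ + x)) + 7 * Real.exp (3 * (ρ₁ - x)) +
        8 * Real.exp (-(3 * (ρ₁ + x))) + 8 * Real.exp (-(3 * (ρ₁ - x))) = 20 * Real.sqrt 2 ↔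
        x = 0) := by
  intro x hx0 hx1
  set s := Real.sqrt 2 with hsdef
  have hs0 : 0 < s := Real.sqrt_pos.mpr (by norm_num)
  have hs2 : s ^ 2 = 2 := Real.sq_sqrt (by norm_num)
  set t := Real.exp (3 * x) with htdef
  have ht0 : 0 < t := Real.exp_pos _
  have ht1 : 1 ≤ t := Real.one_le_exp (by linarith)
  have he3 : Real.exp (3 * ρ₁) = 2 * s := by
    rw [hρ₁, show (3 : ℝ) = ((3 : ℕ) : ℝ) by norm_num, Real.exp_nat_mul,
      Real.exp_log hs0]
    nlinarith [hs2]
  have ht4 : t ≤ 2 * s := by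
    rw [htdef, ← he3]
    exact Real.exp_le_exp.mpr (by rw [hρ₁]; linarith)
  have hs4 : 2 * s < 4 := by nlinarith
  have hA : Real.exp (3 * (ρ₁ + x)) = 2 * s * t := by
    rw [mul_add, Real.exp_add, he3]
  have hB : Real.exp (3 * (ρ₁ - x)) = 2 * s / t := by
    rw [mul_sub, Real.exp_sub, he3]
  have hC : Real.exp (-(3 * (ρ₁ + x))) = s / (4 * t) := by
    rw [Real.exp_neg, hA]
    rw [eq_div_iff (by positivity)]
    field_simp
    nlinarith [hs2]
  have hD : Real.exp (-(3 * (ρ₁ - x))) = s * t / 4 := by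
    rw [show -(3 * (ρ₁ - x)) = 3 * x - 3 * ρ₁ by ring, Real.exp_sub, he3, ← htdef]
    rw [div_eq_div_iff (by positivity) (by norm_num)]
    nlinarith [hs2]
  rw [hA, hB, hC, hD]
  have hfact : 20 * s - (2 * s * t + 7 * (2 * s / t) + 8 * (s / (4 * t)) + 8 * (s * t / 4))
      = 4 * s * ((t - 1) * (4 - t)) / t := by
    field_simp
    ring
  have hq : 0 ≤ (t - 1) * (4 - t) := mul_nonneg (by linarith) (by linarith)
  constructor
  · have h1 : 0 ≤ 4 * s * ((t - 1) * (4 - t)) / t :=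
      div_nonneg (mul_nonneg (by positivity) hq) ht0.le
    linarith
  · constructor
    · intro h
      have h2 : 4 * s * ((t - 1) * (4 - t)) / t = 0 := by linarith
      have h3 : 4 * s * ((t - 1) * (4 - t)) = 0 := by
        rcases div_eq_zero_iff.mp h2 with h2 | h2
        · exact h2
        · linarith
      have h4 : t = 1 := by
        by_contra hne
        have hlt : 1 < t := lt_of_le_of_ne ht1 (Ne.symm hne)
        have : 0 < 4 * s * ((t - 1) * (4 - t)) :=
          mul_pos (by positivity) (mul_pos (by linarith) (by linarith))
        linarith
      have h5 : (3 : ℝ) * x = 0 := by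
        have : Real.exp (3 * x) = Real.exp 0 := by
          rw [Real.exp_zero, ← htdef, h4]
        exact Real.exp_injective this
      linarith
    · intro h
      have h4 : t = 1 := by rw [htdef, h]; simp
      rw [h4]
      ring
end

section
/- Let ρ₁ = log(√2). Then: (i) for all x ∈ [0, ρ₁], 384·(e^{3x} + 2e^{-3x}) ≤ 960√2, with equality iff x = ρ₁; (ii) for all x ∈ [0, ρ₁], 48·(2e^{3(ρ₁+x)} + 6e^{3(ρ₁-x)} + 16e^{-3(ρ₁+x)}) ≤ 960√2, with equality iff x = 0; (iii) for all x ∈ [0, (log 3)/2], 48·(3e^{3x} + 21e^{-3x}) ≤ 1152 < 960√2. Hence the overall maximum of these three families of values is 960√2, attained only in case (i) at x = ρ₁ and in case (ii) at x = 0. -/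
/-!
With `u = e^{3x}` each of the three expressions is a positive multiple of `u + pq/u`, where `pq`
is fixed and `u` ranges over a subinterval of `[p, q]`. Since `p + q - (u + pq/u) = (u - p)(q - u)/u`,
such a function is bounded by `p + q` with equality exactly at the endpoints `u = p`, `u = q`.
In (i) `(p, q) = (√2/2, 2√2)` and `u ∈ [1, 2√2]`; in (ii) `(p, q) = (1, 4)` and `u ∈ [1, 2√2]`;
in (iii) `(p, q) = (1, 7)` and `u ∈ [1, 3√3]`.
-/

open Real Set

theorem add_mul_div_le_add_of_mem_Icc {p q u : ℝ} (hp : 0 < p) (hu : u ∈ Icc p q) :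
    u + p * q / u ≤ p + q := by
  have hu0 : 0 < u := hp.trans_le hu.1
  have hgap : p + q - (u + p * q / u) = (u - p) * (q - u) / u := by field_simp; ring
  rw [← sub_nonneg, hgap]
  exact div_nonneg (mul_nonneg (sub_nonneg.2 hu.1) (sub_nonneg.2 hu.2)) hu0.le

theorem add_mul_div_eq_add_iff {p q u : ℝ} (hu : u ≠ 0) :
    u + p * q / u = p + q ↔ u = p ∨ u = q := by
  have hgap : u + p * q / u - (p + q) = (u - p) * (u - q) / u := by field_simp; ring
  rw [← sub_eq_zero, hgap, div_eq_zero_iff, or_iff_left hu, mul_eq_zero, sub_eq_zero, sub_eq_zero]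

theorem exp_three_mul_mem_Icc {x b : ℝ} (hx : x ∈ Icc 0 b) :
    exp (3 * x) ∈ Icc 1 (exp (3 * b)) :=
  ⟨one_le_exp (by linarith [hx.1]), exp_le_exp.2 (by linarith [hx.2])⟩

theorem exp_three_mul_log_sqrt {a : ℝ} (ha : 0 < a) : exp (3 * log √a) = a * √a := by
  rw [show (3 : ℝ) = (3 : ℕ) by norm_num, exp_nat_mul, exp_log (sqrt_pos.2 ha), pow_succ,
    sq_sqrt ha.le]

theorem first_family_bound {x : ℝ} (hx : x ∈ Icc 0 (log √2)) :
    384 * (exp (3 * x) + 2 * exp (-(3 * x))) ≤ 960 * √2 ∧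
      (384 * (exp (3 * x) + 2 * exp (-(3 * x))) = 960 * √2 ↔ x = log √2) := by
  have hq : exp (3 * log √2) = 2 * √2 := exp_three_mul_log_sqrt two_pos
  have hu := exp_three_mul_mem_Icc hx
  rw [hq] at hu
  have hs : √2 * √2 = 2 := mul_self_sqrt zero_le_two
  have hp : √2 / 2 < 1 := by nlinarith [sqrt_nonneg 2]
  have hpq : √2 / 2 * (2 * √2) = 2 := by linear_combination hs
  have hval : 384 * (exp (3 * x) + 2 * exp (-(3 * x))) =
      384 * (exp (3 * x) + √2 / 2 * (2 * √2) / exp (3 * x)) := by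
    rw [exp_neg, hpq, div_eq_mul_inv]
  have hmax : 960 * √2 = 384 * (√2 / 2 + 2 * √2) := by ring
  rw [hval, hmax, mul_le_mul_iff_right₀ (by norm_num), mul_right_inj' (by norm_num),
    add_mul_div_eq_add_iff (exp_pos _).ne', or_iff_right (by linarith [hu.1])]
  refine ⟨add_mul_div_le_add_of_mem_Icc (by positivity) ⟨by linarith [hu.1], hu.2⟩, ?_⟩
  rw [← hq, exp_eq_exp, mul_right_inj' three_ne_zero]

theorem second_family_bound {x : ℝ} (hx : x ∈ Icc 0 (log √2)) :
    48 * (2 * exp (3 * (log √2 + x)) + 6 * exp (3 * (log √2 - x)) +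
        16 * exp (-(3 * (log √2 + x)))) ≤ 960 * √2 ∧
      (48 * (2 * exp (3 * (log √2 + x)) + 6 * exp (3 * (log √2 - x)) +
        16 * exp (-(3 * (log √2 + x)))) = 960 * √2 ↔ x = 0) := by
  have hq : exp (3 * log √2) = 2 * √2 := exp_three_mul_log_sqrt two_pos
  have hu := exp_three_mul_mem_Icc hx
  rw [hq] at hu
  have hs : √2 * √2 = 2 := mul_self_sqrt zero_le_two
  have hlt : 2 * √2 < 4 := by nlinarith [sqrt_nonneg 2]
  have hval : 48 * (2 * exp (3 * (log √2 + x)) + 6 * exp (3 * (log √2 - x)) +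
      16 * exp (-(3 * (log √2 + x)))) = 192 * √2 * (exp (3 * x) + 1 * 4 / exp (3 * x)) := by
    rw [mul_add 3, mul_sub 3, exp_neg, exp_add, exp_sub, hq]
    field_simp
    linear_combination -384 * hs
  have hmax : 960 * √2 = 192 * √2 * (1 + 4) := by ring
  have hc : 0 < 192 * √2 := by positivity
  rw [hval, hmax, mul_le_mul_iff_right₀ hc, mul_right_inj' hc.ne',
    add_mul_div_eq_add_iff (exp_pos _).ne', or_iff_left (by linarith [hu.2]), exp_eq_one_iff]
  exact ⟨add_mul_div_le_add_of_mem_Icc one_pos ⟨hu.1, by linarith [hu.2]⟩, by simp⟩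

theorem third_family_le {x : ℝ} (hx : x ∈ Icc 0 (log 3 / 2)) :
    48 * (3 * exp (3 * x) + 21 * exp (-(3 * x))) ≤ 1152 := by
  have hq : exp (3 * (log 3 / 2)) = 3 * √3 := by
    rw [← log_sqrt zero_le_three, exp_three_mul_log_sqrt three_pos]
  have hu := exp_three_mul_mem_Icc hx
  rw [hq] at hu
  have hval : 48 * (3 * exp (3 * x) + 21 * exp (-(3 * x))) =
      144 * (exp (3 * x) + 1 * 7 / exp (3 * x)) := by
    rw [exp_neg]; ring
  have h7 : 3 * √3 ≤ 7 := by nlinarith [sq_sqrt zero_le_three, sqrt_nonneg 3]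
  rw [hval, show (1152 : ℝ) = 144 * (1 + 7) by norm_num, mul_le_mul_iff_right₀ (by norm_num)]
  exact add_mul_div_le_add_of_mem_Icc one_pos ⟨hu.1, hu.2.trans h7⟩

/-- Theorem 4.11 (analytic core): with `ρ₁ = log √2`,
(i) for `x ∈ [0, ρ₁]`, `384(e^{3x} + 2e^{-3x}) ≤ 960√2`, with equality iff `x = ρ₁`;
(ii) for `x ∈ [0, ρ₁]`, `48(2e^{3(ρ₁+x)} + 6e^{3(ρ₁-x)} + 16e^{-3(ρ₁+x)}) ≤ 960√2`,
with equality iff `x = 0`;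
(iii) for `x ∈ [0, (log 3)/2]`, `48(3e^{3x} + 21e^{-3x}) ≤ 1152 < 960√2`. -/
theorem optimal_horoball_packing_24cell (ρ₁ : ℝ) (hρ₁ : ρ₁ = Real.log (Real.sqrt 2)) :
    (∀ x ∈ Set.Icc (0 : ℝ) ρ₁,
      384 * (Real.exp (3 * x) + 2 * Real.exp (-(3 * x))) ≤ 960 * Real.sqrt 2 ∧
      (384 * (Real.exp (3 * x) + 2 * Real.exp (-(3 * x))) = 960 * Real.sqrt 2 ↔ x = ρ₁)) ∧
    (∀ x ∈ Set.Icc (0 : ℝ) ρ₁,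
      48 * (2 * Real.exp (3 * (ρ₁ + x)) + 6 * Real.exp (3 * (ρ₁ - x)) +
        16 * Real.exp (-(3 * (ρ₁ + x)))) ≤ 960 * Real.sqrt 2 ∧
      (48 * (2 * Real.exp (3 * (ρ₁ + x)) + 6 * Real.exp (3 * (ρ₁ - x)) +
        16 * Real.exp (-(3 * (ρ₁ + x)))) = 960 * Real.sqrt 2 ↔ x = 0)) ∧
    (∀ x ∈ Set.Icc (0 : ℝ) (Real.log 3 / 2),
      48 * (3 * Real.exp (3 * x) + 21 * Real.exp (-(3 * x))) ≤ 1152) ∧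
    (1152 : ℝ) < 960 * Real.sqrt 2 := by
  subst hρ₁
  have hsqrt : (1152 : ℝ) < 960 * √2 := by nlinarith [sq_sqrt zero_le_two, sqrt_nonneg 2]
  exact ⟨fun _ => first_family_bound, fun _ => second_family_bound, fun _ => third_family_le,
    hsqrt⟩
end

section
/- On ℝ⁵ with the bilinear form ⟨x,y⟩ = −x⁰y⁰ + x¹y¹ + x²y² + x³y³ + x⁴y⁴, let t₁ = (1, 1/√2, 1/(2√2), 1/(2√2), 0) and t₃ = (1, 1/(2√2), 1/(2√2), 1/(2√2), 1/(2√2)). Then ⟨t₁,t₁⟩ < 0, ⟨t₃,t₃⟩ < 0, ⟨t₁,t₃⟩ < 0, and ⟨t₁,t₃⟩² = 2·⟨t₁,t₁⟩·⟨t₃,t₃⟩; equivalently, −⟨t₁,t₃⟩/√(⟨t₁,t₁⟩·⟨t₃,t₃⟩) = √2. -/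
/-- Equation (4.2): on `ℝ⁵` with the Lorentzian form `⟨x,y⟩ = -x⁰y⁰ + Σ xⁱyⁱ`, for
`t₁ = (1, 1/√2, 1/(2√2), 1/(2√2), 0)` (midpoint of the edge `A₁A₃`) and
`t₃ = (1, 1/(2√2), 1/(2√2), 1/(2√2), 1/(2√2))` (center of an octahedral facet),
both are proper points, `⟨t₁,t₃⟩ < 0`, `⟨t₁,t₃⟩² = 2⟨t₁,t₁⟩⟨t₃,t₃⟩`, i.e.
`cosh s₁ = -⟨t₁,t₃⟩/√(⟨t₁,t₁⟩⟨t₃,t₃⟩) = √2`. -/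
theorem cosh_s1_eq_sqrt2 :
    let B : (Fin 5 → ℝ) → (Fin 5 → ℝ) → ℝ := fun x y =>
      -(x 0 * y 0) + x 1 * y 1 + x 2 * y 2 + x 3 * y 3 + x 4 * y 4
    let t₁ : Fin 5 → ℝ :=
      ![1, 1 / Real.sqrt 2, 1 / (2 * Real.sqrt 2), 1 / (2 * Real.sqrt 2), 0]
    let t₃ : Fin 5 → ℝ :=
      ![1, 1 / (2 * Real.sqrt 2), 1 / (2 * Real.sqrt 2), 1 / (2 * Real.sqrt 2),
        1 / (2 * Real.sqrt 2)]
    B t₁ t₁ < 0 ∧ B t₃ t₃ < 0 ∧ B t₁ t₃ < 0 ∧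
    (B t₁ t₃) ^ 2 = 2 * (B t₁ t₁ * B t₃ t₃) ∧
    -(B t₁ t₃) / Real.sqrt (B t₁ t₁ * B t₃ t₃) = Real.sqrt 2 := by
  intro B t₁ t₃
  have hs : (0:ℝ) < Real.sqrt 2 := by positivity
  have h2 : Real.sqrt 2 * Real.sqrt 2 = 2 := Real.mul_self_sqrt (by norm_num)
  have hb : (1 / Real.sqrt 2) * (1 / Real.sqrt 2) = 1/2 := by
    rw [div_mul_div_comm, h2]; norm_num
  have ha : (1 / (2 * Real.sqrt 2)) * (1 / (2 * Real.sqrt 2)) = 1/8 := by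
    rw [div_mul_div_comm, show (2*Real.sqrt 2)*(2*Real.sqrt 2) = 8 by nlinarith [h2]]
    norm_num
  have hc : (1 / Real.sqrt 2) * (1 / (2 * Real.sqrt 2)) = 1/4 := by
    rw [div_mul_div_comm, show Real.sqrt 2*(2*Real.sqrt 2) = 4 by nlinarith [h2]]
    norm_num
  have e1 : B t₁ t₁ = -(1/4) := by
    show -((1:ℝ) * 1) + (1 / Real.sqrt 2) * (1 / Real.sqrt 2)
      + (1 / (2 * Real.sqrt 2)) * (1 / (2 * Real.sqrt 2))
      + (1 / (2 * Real.sqrt 2)) * (1 / (2 * Real.sqrt 2)) + 0 * 0 = -(1/4)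
    simp only [ha, hb, hc]; norm_num
  have e3 : B t₃ t₃ = -(1/2) := by
    show -((1:ℝ) * 1) + (1 / (2 * Real.sqrt 2)) * (1 / (2 * Real.sqrt 2))
      + (1 / (2 * Real.sqrt 2)) * (1 / (2 * Real.sqrt 2))
      + (1 / (2 * Real.sqrt 2)) * (1 / (2 * Real.sqrt 2))
      + (1 / (2 * Real.sqrt 2)) * (1 / (2 * Real.sqrt 2)) = -(1/2)
    simp only [ha, hb, hc]; norm_num
  have e13 : B t₁ t₃ = -(1/2) := by
    show -((1:ℝ) * 1) + (1 / Real.sqrt 2) * (1 / (2 * Real.sqrt 2))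
      + (1 / (2 * Real.sqrt 2)) * (1 / (2 * Real.sqrt 2))
      + (1 / (2 * Real.sqrt 2)) * (1 / (2 * Real.sqrt 2))
      + 0 * (1 / (2 * Real.sqrt 2)) = -(1/2)
    simp only [ha, hb, hc]; norm_num
  rw [e1, e3, e13]
  refine ⟨by norm_num, by norm_num, by norm_num, by norm_num, ?_⟩
  have : -(1/4 : ℝ) * -(1/2) = (Real.sqrt 2 / 4) ^ 2 := by
    rw [div_pow]; rw [Real.sq_sqrt (by norm_num : (2:ℝ) ≥ 0)]; norm_num
  rw [show (-(1/4 : ℝ)) * -(1/2) = (1/4) * (1/2) by ring] at this ⊢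
  rw [this, Real.sqrt_sq (by positivity)]
  field_simp
  nlinarith [h2]
end

section
/- On ℝ⁵ with the bilinear form ⟨x,y⟩ = −x⁰y⁰ + x¹y¹ + x²y² + x³y³ + x⁴y⁴, let t = (1, 1/(2√2), 1/(2√2), 1/√2, 0) and t₃ = (1, 1/(2√2), 1/(2√2), 1/(2√2), 1/(2√2)). Then ⟨t,t⟩ < 0, ⟨t₃,t₃⟩ < 0, ⟨t,t₃⟩ < 0, and ⟨t,t₃⟩² = 2·⟨t,t⟩·⟨t₃,t₃⟩; equivalently, −⟨t,t₃⟩/√(⟨t,t⟩·⟨t₃,t₃⟩) = √2. -/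
/-- Equation (4.4): on `ℝ⁵` with the Lorentzian form `⟨x,y⟩ = -x⁰y⁰ + Σ xⁱyⁱ`, for
`t = (1, 1/(2√2), 1/(2√2), 1/√2, 0)` (midpoint of the edge `A₃A₇`) and
`t₃ = (1, 1/(2√2), 1/(2√2), 1/(2√2), 1/(2√2))` (center of an octahedral facet),
both are proper points, `⟨t,t₃⟩ < 0`, `⟨t,t₃⟩² = 2⟨t,t⟩⟨t₃,t₃⟩`, i.e.
`cosh s₂ = -⟨t,t₃⟩/√(⟨t,t⟩⟨t₃,t₃⟩) = √2`. -/
theorem cosh_s2_eq_sqrt2 :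
    let B : (Fin 5 → ℝ) → (Fin 5 → ℝ) → ℝ := fun x y =>
      -(x 0 * y 0) + x 1 * y 1 + x 2 * y 2 + x 3 * y 3 + x 4 * y 4
    let t : Fin 5 → ℝ :=
      ![1, 1 / (2 * Real.sqrt 2), 1 / (2 * Real.sqrt 2), 1 / Real.sqrt 2, 0]
    let t₃ : Fin 5 → ℝ :=
      ![1, 1 / (2 * Real.sqrt 2), 1 / (2 * Real.sqrt 2), 1 / (2 * Real.sqrt 2),
        1 / (2 * Real.sqrt 2)]
    B t t < 0 ∧ B t₃ t₃ < 0 ∧ B t t₃ < 0 ∧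
    (B t t₃) ^ 2 = 2 * (B t t * B t₃ t₃) ∧
    -(B t t₃) / Real.sqrt (B t t * B t₃ t₃) = Real.sqrt 2 := by
  intro B t t₃
  have hs : Real.sqrt 2 ^ 2 = 2 := Real.sq_sqrt (by norm_num)
  have hspos : (0:ℝ) < Real.sqrt 2 := Real.sqrt_pos.mpr (by norm_num)
  have hmx : ∀ (a b c d e : ℝ), (![a,b,c,d,e] : Fin 5 → ℝ) 0 = a ∧
      (![a,b,c,d,e] : Fin 5 → ℝ) 1 = b ∧ (![a,b,c,d,e] : Fin 5 → ℝ) 2 = c ∧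
      (![a,b,c,d,e] : Fin 5 → ℝ) 3 = d ∧ (![a,b,c,d,e] : Fin 5 → ℝ) 4 = e := by
    intro a b c d e
    refine ⟨rfl, rfl, rfl, rfl, rfl⟩
  have h1 : B t t = -(1/4) := by
    simp only [B, t, (hmx _ _ _ _ _).1, (hmx _ _ _ _ _).2.1, (hmx _ _ _ _ _).2.2.1,
      (hmx _ _ _ _ _).2.2.2.1, (hmx _ _ _ _ _).2.2.2.2]
    field_simp
    nlinarith [hs, hspos]
  have h2 : B t₃ t₃ = -(1/2) := by
    simp only [B, t₃, (hmx _ _ _ _ _).1, (hmx _ _ _ _ _).2.1, (hmx _ _ _ _ _).2.2.1,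
      (hmx _ _ _ _ _).2.2.2.1, (hmx _ _ _ _ _).2.2.2.2]
    field_simp
    nlinarith [hs, hspos]
  have h3 : B t t₃ = -(1/2) := by
    simp only [B, t, t₃, (hmx _ _ _ _ _).1, (hmx _ _ _ _ _).2.1, (hmx _ _ _ _ _).2.2.1,
      (hmx _ _ _ _ _).2.2.2.1, (hmx _ _ _ _ _).2.2.2.2]
    field_simp
    nlinarith [hs, hspos]
  rw [h1, h2, h3]
  refine ⟨by norm_num, by norm_num, by norm_num, by norm_num, ?_⟩
  have hsq : Real.sqrt ((-(1/4:ℝ)) * -(1/2)) = 1/(2*Real.sqrt 2) := by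
    rw [show (-(1/4:ℝ)) * -(1/2) = (1/(2*Real.sqrt 2))^2 by
      field_simp; nlinarith [hs]]
    exact Real.sqrt_sq (by positivity)
  rw [hsq]
  field_simp
end

section
/- On ℝ⁵ with the bilinear form ⟨x,y⟩ = −x⁰y⁰ + x¹y¹ + x²y² + x³y³ + x⁴y⁴, let q = (1, 5/(7√2), 3/(7√2), 0, 2/(7√2)) and h = (1, 1/(2√2), 0, 0, 1/(2√2)). Then ⟨q,q⟩ < 0, ⟨h,h⟩ < 0, ⟨q,h⟩ < 0, and ⟨q,h⟩² = (49/40)·⟨q,q⟩·⟨h,h⟩; equivalently, −⟨q,h⟩/√(⟨q,q⟩·⟨h,h⟩) = 7√2/(4√5). -/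
/-- Distance `ρ₄ = QH`: on `ℝ⁵` with the Lorentzian form `⟨x,y⟩ = -x⁰y⁰ + Σ xⁱyⁱ`, for
`q = (1, 5/(7√2), 3/(7√2), 0, 2/(7√2))` and `h = (1, 1/(2√2), 0, 0, 1/(2√2))`,
both are proper points, `⟨q,h⟩ < 0`, `⟨q,h⟩² = (49/40)⟨q,q⟩⟨h,h⟩`, i.e.
`cosh ρ₄ = -⟨q,h⟩/√(⟨q,q⟩⟨h,h⟩) = 7√2/(4√5)`. -/
theorem cosh_rho4 :
    let B : (Fin 5 → ℝ) → (Fin 5 → ℝ) → ℝ := fun x y =>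
      -(x 0 * y 0) + x 1 * y 1 + x 2 * y 2 + x 3 * y 3 + x 4 * y 4
    let q : Fin 5 → ℝ :=
      ![1, 5 / (7 * Real.sqrt 2), 3 / (7 * Real.sqrt 2), 0, 2 / (7 * Real.sqrt 2)]
    let h : Fin 5 → ℝ :=
      ![1, 1 / (2 * Real.sqrt 2), 0, 0, 1 / (2 * Real.sqrt 2)]
    B q q < 0 ∧ B h h < 0 ∧ B q h < 0 ∧
    (B q h) ^ 2 = (49 / 40) * (B q q * B h h) ∧
    -(B q h) / Real.sqrt (B q q * B h h) = 7 * Real.sqrt 2 / (4 * Real.sqrt 5) := by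
  intro B q h
  have hs : (0:ℝ) < Real.sqrt 2 := Real.sqrt_pos.mpr (by norm_num)
  have hs2 : Real.sqrt 2 * Real.sqrt 2 = 2 := Real.mul_self_sqrt (by norm_num)
  have hq : B q q = -30/49 := by
    show -(1*1 : ℝ) + 5 / (7 * Real.sqrt 2) * (5 / (7 * Real.sqrt 2)) +
      3 / (7 * Real.sqrt 2) * (3 / (7 * Real.sqrt 2)) + 0 * 0 +
      2 / (7 * Real.sqrt 2) * (2 / (7 * Real.sqrt 2)) = -30/49
    field_simp
    nlinarith [hs2]
  have hh : B h h = -3/4 := by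
    show -(1*1 : ℝ) + 1 / (2 * Real.sqrt 2) * (1 / (2 * Real.sqrt 2)) + 0 * 0 + 0 * 0 +
      1 / (2 * Real.sqrt 2) * (1 / (2 * Real.sqrt 2)) = -3/4
    field_simp
    nlinarith [hs2]
  have hqh : B q h = -3/4 := by
    show -(1*1 : ℝ) + 5 / (7 * Real.sqrt 2) * (1 / (2 * Real.sqrt 2)) +
      3 / (7 * Real.sqrt 2) * 0 + 0 * 0 +
      2 / (7 * Real.sqrt 2) * (1 / (2 * Real.sqrt 2)) = -3/4
    field_simp
    nlinarith [hs2]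
  refine ⟨by rw [hq]; norm_num, by rw [hh]; norm_num, by rw [hqh]; norm_num, ?_, ?_⟩
  · rw [hq, hh, hqh]; norm_num
  · rw [hq, hh, hqh]
    have h90 : ((-30/49 : ℝ)) * (-3/4) = (3 * Real.sqrt 10 / 14) ^ 2 := by
      rw [div_pow, mul_pow, Real.sq_sqrt (by norm_num : (10:ℝ) ≥ 0)]; ring
    rw [h90, Real.sqrt_sq (by positivity)]
    have h10 : Real.sqrt 2 * Real.sqrt 5 = Real.sqrt 10 := by
      rw [← Real.sqrt_mul (by norm_num)]; norm_num
    have h5 : (0:ℝ) < Real.sqrt 5 := Real.sqrt_pos.mpr (by norm_num)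
    have h10p : (0:ℝ) < Real.sqrt 10 := Real.sqrt_pos.mpr (by norm_num)
    rw [div_eq_div_iff (by positivity) (by positivity)]
    nlinarith [h10, hs2, Real.mul_self_sqrt (by norm_num : (5:ℝ) ≥ 0), Real.mul_self_sqrt (by norm_num : (10:ℝ) ≥ 0)]
end
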